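/- arXiv:1903.09854 — 4 statements merged into one kernel-verified Lean document; each statement's English description precedes it below -/
import Mathlib

section
/- Let n ≥ 1 be an integer and let G be a nontrivial subgroup of the symmetric group S_n whose natural action on {1,…,n} is not primitive. Then n > P(G); that is, G possesses a maximal subgroup M with index [G : M] < n. -/
/-!
A proper subgroup of index `< n` lies in a maximal subgroup of no larger index, so it suffices
to find one. If `G` is intransitive, take the stabilizer of a point moved by `G`: its index is the
size of the orbit, which is `< n`. If `G` is transitive with a block `B` such that `1 < |B| < n`,
take the setwise stabilizer of `B`: its index is the number `n / |B|` of translates of `B`.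
-/

open MulAction Pointwise

/-- A group action is primitive if it is transitive and every block is trivial. -/
def IsPrimitiveAction (G X : Type*) [Group G] [MulAction G X] : Prop :=
  MulAction.IsPretransitive G X ∧ ∀ B : Set X, MulAction.IsBlock G B → MulAction.IsTrivialBlock B

namespace Subgroup

theorem exists_isCoatom_index_le_of_ne_top {G : Type*} [Group G] [Finite G] {H : Subgroup G}
    (hH : H ≠ ⊤) : ∃ M : Subgroup G, IsCoatom M ∧ M.index ≤ H.index := by
  obtain ⟨M, hM, hHM⟩ := (eq_top_or_exists_le_coatom H).resolve_left hH
  exact ⟨M, hM, Nat.le_of_dvd (Nat.pos_of_ne_zero index_ne_zero_of_finite) (index_dvd_of_le hHM)⟩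

end Subgroup

namespace MulAction

variable {G X : Type*} [Group G] [MulAction G X]

theorem stabilizer_ne_top_of_smul_ne {g : G} {a : X} (h : g • a ≠ a) : stabilizer G a ≠ ⊤ :=
  fun htop ↦ h (mem_stabilizer_iff.mp (htop ▸ Subgroup.mem_top g))

theorem exists_stabilizer_ne_top [FaithfulSMul G X] [Nontrivial G] :
    ∃ a : X, stabilizer G a ≠ ⊤ := by
  obtain ⟨g, hg⟩ := exists_ne (1 : G)
  obtain ⟨a, ha⟩ : ∃ a : X, g • a ≠ a := by
    by_contra! h
    exact hg (eq_of_smul_eq_smul fun a ↦ by rw [h, one_smul])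
  exact ⟨a, stabilizer_ne_top_of_smul_ne ha⟩

theorem stabilizer_set_ne_top [IsPretransitive G X] {B : Set X} (hB : B.Nonempty)
    (hB_univ : B ≠ Set.univ) : stabilizer G B ≠ ⊤ := by
  obtain ⟨a, ha⟩ := hB
  obtain ⟨b, hb⟩ := (Set.ne_univ_iff_exists_notMem B).mp hB_univ
  obtain ⟨g, rfl⟩ := exists_smul_eq G a b
  intro htop
  have hg : g • B = B := mem_stabilizer_iff.mp (htop ▸ Subgroup.mem_top g)
  exact hb (hg ▸ Set.smul_mem_smul_set ha)

variable [Finite X]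

theorem index_stabilizer_lt_card_of_not_isPretransitive (h : ¬IsPretransitive G X) (a : X) :
    (stabilizer G a).index < Nat.card X := by
  rw [index_stabilizer, ← Set.ncard_univ]
  refine Set.ncard_lt_ncard (Set.ssubset_univ_iff.mpr ?_) Set.finite_univ
  rwa [Ne, ← isPretransitive_iff_orbit_eq_univ]

theorem IsBlock.index_stabilizer_lt_card [IsPretransitive G X] {B : Set X} (hB : IsBlock G B)
    (hB_nt : B.Nontrivial) : (stabilizer G B).index < Nat.card X := by
  have h2 : 2 ≤ B.ncard := (Set.one_lt_ncard B.toFinite).mpr hB_nt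
  have hX : 0 < Nat.card X := Nat.card_pos_iff.mpr ⟨⟨hB_nt.nonempty.some⟩, inferInstance⟩
  have hcard := hB.ncard_block_mul_ncard_orbit_eq hB_nt.nonempty
  rw [index_stabilizer]
  nlinarith

end MulAction

theorem exists_ne_top_index_lt_card_of_not_isPrimitiveAction {G X : Type*} [Group G]
    [MulAction G X] [Finite X] [FaithfulSMul G X] [Nontrivial G]
    (hprim : ¬IsPrimitiveAction G X) :
    ∃ H : Subgroup G, H ≠ ⊤ ∧ H.index < Nat.card X := by
  by_cases htrans : IsPretransitive G X
  · obtain ⟨B, hB, hB_nt⟩ : ∃ B : Set X, IsBlock G B ∧ ¬IsTrivialBlock B := by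
      simpa [IsPrimitiveAction, htrans] using hprim
    rw [IsTrivialBlock, not_or, Set.not_subsingleton_iff] at hB_nt
    exact ⟨stabilizer G B, stabilizer_set_ne_top hB_nt.1.nonempty hB_nt.2,
      hB.index_stabilizer_lt_card hB_nt.1⟩
  · obtain ⟨a, ha⟩ := exists_stabilizer_ne_top (G := G) (X := X)
    exact ⟨stabilizer G a, ha, index_stabilizer_lt_card_of_not_isPretransitive htrans a⟩

theorem stmt_1_general (n : ℕ) (G : Subgroup (Equiv.Perm (Fin n))) (hG : G ≠ ⊥)
    (hprim : ¬ IsPrimitiveAction ↥G (Fin n)) :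
    ∃ M : Subgroup ↥G, IsCoatom M ∧ M.index < n := by
  have : Nontrivial G := (Subgroup.nontrivial_iff_ne_bot G).mpr hG
  obtain ⟨H, hH, hH_lt⟩ := exists_ne_top_index_lt_card_of_not_isPrimitiveAction hprim
  obtain ⟨M, hM, hMH⟩ := Subgroup.exists_isCoatom_index_le_of_ne_top hH
  exact ⟨M, hM, hMH.trans_lt (by simpa only [Nat.card_fin] using hH_lt)⟩

/-- Let `n ≥ 1` and let `G` be a nontrivial subgroup of the symmetric group `S_n` whose
natural action on `{1,…,n}` is not primitive. Then `G` possesses a maximal subgroup `M`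
with index `[G : M] < n`. -/
theorem stmt_1 (n : ℕ) (hn : 1 ≤ n) (G : Subgroup (Equiv.Perm (Fin n))) (hG : G ≠ ⊥)
    (hprim : ¬ IsPrimitiveAction ↥G (Fin n)) :
    ∃ M : Subgroup ↥G, IsCoatom M ∧ M.index < n :=
  stmt_1_general n G hG hprim
end

section
/- Let n and ℓ be integers with n ≥ 324 and ℓ ≥ 8, and set L(n) = (1/2)·log₂ n + 1. Assume that ℓ ≤ (log₂ n + 2)·log₂ n and that (2(n+3)/ℓ − 6)^ℓ < n^{L(n)}. Then ℓ ≤ 0.7·log₂ n + 1.4. -/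
/-!
With `L = log₂ n` and `B = L (L/2 + 1)`, the hypothesis on `(2(n+3)/ℓ - 6)^ℓ` says that
`g(1/ℓ) < 0` for `g v = 2(n+3) v - 6 - 2^(B v)`. The function `g` is concave, so it is
nonnegative on the whole interval `[1/((L+2)L), 1/(0.7L+1.4)]` once it is nonnegative at the
endpoints, where `2^(B v)` equals `√2` and `2^(5L/7)` respectively. Both endpoint inequalities
are elementary estimates of `2^L` from below, valid for `L ≥ 25/3` (i.e. `2^25 ≤ 324^3`).
Hence `ℓ` cannot lie in `(0.7L + 1.4, (L+2)L]`.
-/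

open Real Set

lemma twentyFive_div_three_le_logb_two {x : ℝ} (hx : 324 ≤ x) : 25 / 3 ≤ logb 2 x := by
  rw [le_logb_iff_rpow_le one_lt_two (by linarith)]
  refine le_trans (le_of_pow_le_pow_left₀ three_ne_zero (by norm_num) ?_) hx
  rw [← rpow_natCast, ← rpow_mul zero_le_two]
  norm_num

lemma one_add_mul_add_sq_le_two_rpow {w : ℝ} (hw : 0 ≤ w) :
    1 + 0.693 * w + 0.24 * w ^ 2 ≤ (2 : ℝ) ^ w := by
  have hlog : 0.693 * w ≤ w * log 2 := by nlinarith [log_two_gt_d9]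
  have hsq : 0.48 * w ^ 2 ≤ (w * log 2) ^ 2 := by nlinarith
  have hexp := quadratic_le_exp_of_nonneg (mul_nonneg hw (log_nonneg one_le_two))
  rw [rpow_def_of_pos two_pos, mul_comm (log 2)]
  linarith

lemma sqrt_two_add_six_mul_le {L : ℝ} (hL : 25 / 3 ≤ L) :
    (√2 + 6) * ((L + 2) * L) ≤ 2 * (2 ^ L + 3) := by
  have hsplit : (2 : ℝ) ^ L = 256 * 2 ^ (L - 8) := by
    rw [show (256 : ℝ) = 2 ^ (8 : ℝ) by norm_num, ← rpow_add two_pos]; ring_nf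
  have hw := one_add_mul_add_sq_le_two_rpow (w := L - 8) (by linarith)
  have hpos : 0 ≤ (L + 2) * L := by nlinarith
  calc (√2 + 6) * ((L + 2) * L) ≤ (3 / 2 + 6) * ((L + 2) * L) := by
        gcongr; exact sqrt_two_lt_three_halves.le
    _ ≤ 2 * (2 ^ L + 3) := by rw [hsplit]; nlinarith

lemma two_rpow_add_six_mul_le {L : ℝ} (hL : 25 / 3 ≤ L) :
    (2 ^ (5 * L / 7) + 6) * (0.7 * L + 1.4) ≤ 2 * (2 ^ L + 3) := by
  have hXY : (2 : ℝ) ^ L = 2 ^ (5 * L / 7) * 2 ^ (2 * L / 7) := by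
    rw [← rpow_add two_pos]; ring_nf
  have hY : (2 : ℝ) ^ (2 * L / 7) = 4 * 2 ^ (2 * L / 7 - 2) := by
    rw [show (4 : ℝ) = 2 ^ (2 : ℝ) by norm_num, ← rpow_add two_pos]; ring_nf
  set X : ℝ := 2 ^ (5 * L / 7)
  set Y : ℝ := 2 ^ (2 * L / 7)
  have hX : 18 ≤ X :=
    calc (18 : ℝ) ≤ 2 ^ (5 : ℝ) := by norm_num
      _ ≤ X := rpow_le_rpow_of_exponent_le one_le_two (by linarith)
  have hLY : 0.7 * L + 1.4 ≤ 3 / 2 * Y := by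
    have hw := one_add_mul_add_sq_le_two_rpow (w := 2 * L / 7 - 2) (by linarith)
    nlinarith
  have hYpos : 0 < Y := by positivity
  calc (X + 6) * (0.7 * L + 1.4) ≤ (X + 6) * (3 / 2 * Y) := by gcongr
    _ ≤ 2 * (X * Y + 3) := by nlinarith
    _ = 2 * (2 ^ L + 3) := by rw [hXY]

lemma rpow_inv_le_of_mem_Icc {β c d a b x : ℝ} (hβ : 0 < β) (ha : 0 < a) (hx : x ∈ Icc a b)
    (hfa : β ^ a⁻¹ ≤ c / a - d) (hfb : β ^ b⁻¹ ≤ c / b - d) : β ^ x⁻¹ ≤ c / x - d := by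
  have hconv : ConvexOn ℝ univ (fun v ↦ β ^ v - c * v) :=
    (convexOn_rpow_left hβ).sub ((c • LinearMap.id : ℝ →ₗ[ℝ] ℝ).concaveOn convex_univ)
  have hmem : x⁻¹ ∈ Icc b⁻¹ a⁻¹ := ⟨inv_anti₀ (ha.trans_le hx.1) hx.2, inv_anti₀ ha hx.1⟩
  have hchord := hconv.le_max_of_mem_Icc (mem_univ _) (mem_univ _) hmem
  rw [div_eq_mul_inv] at hfa hfb ⊢
  linarith [max_le (a := β ^ b⁻¹ - c * b⁻¹) (b := β ^ a⁻¹ - c * a⁻¹) (c := -d)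
    (by linarith) (by linarith)]

lemma two_rpow_inv_le_of_mem_Icc {L x : ℝ} (hL : 25 / 3 ≤ L)
    (hx : x ∈ Icc (0.7 * L + 1.4) ((L + 2) * L)) :
    ((2 : ℝ) ^ (L * (1 / 2 * L + 1))) ^ x⁻¹ ≤ 2 * (2 ^ L + 3) / x - 6 := by
  have hpow (y : ℝ) : ((2 : ℝ) ^ (L * (1 / 2 * L + 1))) ^ y = 2 ^ (L * (1 / 2 * L + 1) * y) :=
    (rpow_mul zero_le_two _ _).symm
  have h0 : 0 < 0.7 * L + 1.4 := by linarith
  have h1 : 0 < (L + 2) * L := by nlinarith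
  refine rpow_inv_le_of_mem_Icc (by positivity) h0 hx ?_ ?_
  · rw [hpow, show L * (1 / 2 * L + 1) * (0.7 * L + 1.4)⁻¹ = 5 * L / 7 by field_simp; ring,
      le_sub_iff_add_le, le_div_iff₀ h0]
    exact two_rpow_add_six_mul_le hL
  · rw [hpow, show L * (1 / 2 * L + 1) * ((L + 2) * L)⁻¹ = 1 / 2 by field_simp,
      ← sqrt_eq_rpow, le_sub_iff_add_le, le_div_iff₀ h1]
    exact sqrt_two_add_six_mul_le hL

theorem stmt_8_general (n ℓ : ℕ) (hn : 324 ≤ n)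
    (h1 : (ℓ : ℝ) ≤ (Real.logb 2 n + 2) * Real.logb 2 n)
    (h2 : (2 * ((n : ℝ) + 3) / ℓ - 6) ^ (ℓ : ℝ) < (n : ℝ) ^ ((1 / 2) * Real.logb 2 n + 1)) :
    (ℓ : ℝ) ≤ 0.7 * Real.logb 2 n + 1.4 := by
  by_contra! hlt
  set L := logb 2 n
  have hL : 25 / 3 ≤ L := twentyFive_div_three_le_logb_two (by exact_mod_cast hn)
  have hnL : (n : ℝ) = 2 ^ L := (rpow_logb two_pos one_lt_two.ne' (by positivity)).symm
  have hroot := two_rpow_inv_le_of_mem_Icc hL ⟨hlt.le, h1⟩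
  rw [← hnL] at hroot
  have hℓ : (ℓ : ℝ) ≠ 0 := (show (0 : ℝ) < ℓ by linarith).ne'
  have hpow_le : (n : ℝ) ^ (1 / 2 * L + 1) ≤ (2 * ((n : ℝ) + 3) / ℓ - 6) ^ (ℓ : ℝ) :=
    calc (n : ℝ) ^ (1 / 2 * L + 1)
        = ((2 ^ (L * (1 / 2 * L + 1))) ^ (ℓ : ℝ)⁻¹) ^ (ℓ : ℝ) := by
          rw [← rpow_mul (by positivity), inv_mul_cancel₀ hℓ, rpow_one, hnL,
            ← rpow_mul zero_le_two]
      _ ≤ _ := rpow_le_rpow (by positivity) hroot (Nat.cast_nonneg ℓ)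
  linarith

/-- Let `n ≥ 324` and `ℓ ≥ 8`, and set `L(n) = (1/2)·log₂ n + 1`.  Assume
`ℓ ≤ (log₂ n + 2)·log₂ n` and `(2(n+3)/ℓ − 6)^ℓ < n^{L(n)}`.
Then `ℓ ≤ 0.7·log₂ n + 1.4`. -/
theorem stmt_8 (n ℓ : ℕ) (hn : 324 ≤ n) (hl : 8 ≤ ℓ)
    (h1 : (ℓ : ℝ) ≤ (Real.logb 2 n + 2) * Real.logb 2 n)
    (h2 : (2 * ((n : ℝ) + 3) / ℓ - 6) ^ (ℓ : ℝ) < (n : ℝ) ^ ((1 / 2) * Real.logb 2 n + 1)) :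
    (ℓ : ℝ) ≤ 0.7 * Real.logb 2 n + 1.4 :=
  stmt_8_general n ℓ hn h1 h2
end

section
/- Let q ≥ 2, m ≥ 4 and ℓ ≥ 12 be integers, set n = (q^m − 1)/(q − 1), and assume that n ≥ 324 and ℓ ≤ 0.7·log₂ n + 1.4. Put k = ⌈log_q(2ℓ − 1)⌉ + 1. Then (n + 3 − 3ℓ)^ℓ / ℓ! > q^{mk}. -/
/-!
Since `n ≥ q^(m-1)` and `m ≥ 4`, we have `q^(3m) ≤ n^4`; and `ℓ ≥ 12` gives `2k ≤ ℓ`, so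
`q^(3mk) ≤ n^(2ℓ)`. The hypothesis on `ℓ` reads `2^(10ℓ) ≤ 2^14 n^7`, which forces `n ≥ 8ℓ³`;
hence `N = n + 3 - 3ℓ` satisfies `n ≤ 2N` and `N > 4ℓ³`. With `ℓ! ≤ ℓ^ℓ` this gives
`(ℓ! q^(mk))³ ≤ (4ℓ³N²)^ℓ < (N^ℓ)³`.
-/

open Real

lemma pow_pred_le_geomSum_div {q m : ℕ} (hq : 2 ≤ q) (hm : 1 ≤ m) :
    q ^ (m - 1) ≤ (q ^ m - 1) / (q - 1) := by
  rw [← Nat.geomSum_eq hq]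
  exact Finset.single_le_sum (fun _ _ ↦ Nat.zero_le _) (Finset.mem_range.mpr (by omega))

lemma eight_mul_add_two_le_two_pow {j : ℕ} (hj : 6 ≤ j) : 8 * j + 2 ≤ 2 ^ j := by
  induction j, hj using Nat.le_induction with
  | base => norm_num
  | succ j _ ih => rw [pow_succ]; omega

lemma two_mul_clog_add_one_le {q ℓ : ℕ} (hq : 2 ≤ q) (hl : 12 ≤ ℓ) :
    2 * (Nat.clog q (2 * ℓ - 1) + 1) ≤ ℓ := by
  have hclog : Nat.clog 2 (2 * ℓ - 1) ≤ ℓ / 2 - 1 := by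
    refine Nat.clog_le_of_le_pow ?_
    have h := eight_mul_add_two_le_two_pow (j := ℓ / 2) (by omega)
    rw [show ℓ / 2 = ℓ / 2 - 1 + 1 by omega, pow_succ] at h
    omega
  have := Nat.clog_anti_left (n := 2 * ℓ - 1) one_lt_two hq
  omega

lemma eight_mul_cube_pow_seven_le {ℓ : ℕ} (hl : 12 ≤ ℓ) :
    (8 * ℓ ^ 3) ^ 7 * 2 ^ 14 ≤ 2 ^ (10 * ℓ) := by
  induction ℓ, hl using Nat.le_induction with
  | base => norm_num
  | succ ℓ hl ih =>
    have hcube : 8 * (ℓ + 1) ^ 3 ≤ 2 * (8 * ℓ ^ 3) := by nlinarith [sq_nonneg ℓ]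
    calc (8 * (ℓ + 1) ^ 3) ^ 7 * 2 ^ 14
        ≤ (2 * (8 * ℓ ^ 3)) ^ 7 * 2 ^ 14 := by gcongr
      _ = 2 ^ 7 * ((8 * ℓ ^ 3) ^ 7 * 2 ^ 14) := by ring
      _ ≤ 2 ^ 7 * 2 ^ (10 * ℓ) := by gcongr
      _ ≤ 2 ^ (10 * (ℓ + 1)) := by rw [← pow_add]; exact Nat.pow_le_pow_right two_pos (by omega)

lemma two_pow_le_of_le_logb_two {a N : ℕ} (hN : 0 < N) (h : (a : ℝ) ≤ logb 2 N) : 2 ^ a ≤ N := by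
  rw [le_logb_iff_rpow_le one_lt_two (by exact_mod_cast hN), rpow_natCast] at h
  exact_mod_cast h

lemma eight_mul_cube_le_of_le_logb {ℓ n : ℕ} (hl : 12 ≤ ℓ) (hn : 0 < n)
    (hln : (ℓ : ℝ) ≤ 0.7 * logb 2 n + 1.4) : 8 * ℓ ^ 3 ≤ n := by
  have hlog : ((10 * ℓ : ℕ) : ℝ) ≤ logb 2 ((n ^ 7 * 2 ^ 14 : ℕ) : ℝ) := by
    simp only [Nat.cast_mul, Nat.cast_pow, Nat.cast_ofNat]
    rw [logb_mul (by positivity) (by positivity), logb_pow, logb_pow, logb_self_eq_one one_lt_two]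
    norm_num at hln ⊢
    linarith
  have h := (eight_mul_cube_pow_seven_le hl).trans (two_pow_le_of_le_logb_two (by positivity) hlog)
  exact (Nat.pow_le_pow_iff_left (by norm_num)).mp (Nat.le_of_mul_le_mul_right h (by positivity))

lemma pow_mul_pow_three_le {q m k ℓ n : ℕ} (hq : 0 < q) (hm : 4 ≤ m) (hqn : q ^ (m - 1) ≤ n)
    (hk : 2 * k ≤ ℓ) : (q ^ (m * k)) ^ 3 ≤ n ^ (2 * ℓ) := by
  have hn : 1 ≤ n := (Nat.one_le_pow _ _ hq).trans hqn
  calc (q ^ (m * k)) ^ 3 ≤ q ^ ((m - 1) * (4 * k)) := by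
        rw [← pow_mul]
        have h : 3 * m ≤ 4 * (m - 1) := by omega
        exact Nat.pow_le_pow_right hq (by nlinarith [Nat.mul_le_mul_right k h])
    _ = (q ^ (m - 1)) ^ (4 * k) := pow_mul _ _ _
    _ ≤ n ^ (4 * k) := Nat.pow_le_pow_left hqn _
    _ ≤ n ^ (2 * ℓ) := Nat.pow_le_pow_right hn (by omega)

lemma factorial_mul_lt_pow {ℓ x n N : ℕ} (hl : ℓ ≠ 0) (hx : x ^ 3 ≤ n ^ (2 * ℓ))
    (hnN : n ≤ 2 * N) (hN : 4 * ℓ ^ 3 < N) : ℓ.factorial * x < N ^ ℓ := by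
  refine lt_of_pow_lt_pow_left₀ 3 (Nat.zero_le _) ?_
  calc (ℓ.factorial * x) ^ 3 = ℓ.factorial ^ 3 * x ^ 3 := mul_pow _ _ _
    _ ≤ (ℓ ^ ℓ) ^ 3 * (2 * N) ^ (2 * ℓ) :=
        Nat.mul_le_mul (Nat.pow_le_pow_left (Nat.factorial_le_pow ℓ) 3)
          (hx.trans (Nat.pow_le_pow_left hnN _))
    _ = (4 * ℓ ^ 3 * N ^ 2) ^ ℓ := by
        rw [pow_mul (2 * N), ← pow_mul ℓ, mul_comm ℓ 3, pow_mul, ← mul_pow]; ring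
    _ < (N ^ 3) ^ ℓ := by
        refine Nat.pow_lt_pow_left ?_ hl
        calc 4 * ℓ ^ 3 * N ^ 2 < N * N ^ 2 :=
              Nat.mul_lt_mul_of_pos_right hN (pow_pos (by omega) 2)
          _ = N ^ 3 := by ring
    _ = (N ^ ℓ) ^ 3 := by ring

theorem stmt_13_general (q m ℓ n : ℕ) (hq : 2 ≤ q) (hm : 4 ≤ m) (hl : 12 ≤ ℓ)
    (hn : n = (q ^ m - 1) / (q - 1))
    (hln : (ℓ : ℝ) ≤ 0.7 * Real.logb 2 n + 1.4) :
    ((n : ℝ) + 3 - 3 * ℓ) ^ ℓ / (Nat.factorial ℓ : ℝ) >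
      (q : ℝ) ^ ((m : ℝ) * ((⌈Real.logb q (2 * (ℓ : ℝ) - 1)⌉ : ℝ) + 1)) := by
  set k := Nat.clog q (2 * ℓ - 1) + 1
  have hqn : q ^ (m - 1) ≤ n := hn ▸ pow_pred_le_geomSum_div hq (by omega)
  have hn8 : 8 * ℓ ^ 3 ≤ n :=
    eight_mul_cube_le_of_le_logb hl ((Nat.one_le_pow _ _ (by omega)).trans hqn) hln
  have hℓ3 : ℓ ≤ ℓ ^ 3 := Nat.le_self_pow (by norm_num) ℓ
  have hmain : ℓ.factorial * q ^ (m * k) < (n + 3 - 3 * ℓ) ^ ℓ :=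
    factorial_mul_lt_pow (by omega) (pow_mul_pow_three_le (by omega) hm hqn
      (two_mul_clog_add_one_le hq hl)) (by omega) (by omega)
  have hceil : ⌈logb q (2 * (ℓ : ℝ) - 1)⌉ = (Nat.clog q (2 * ℓ - 1) : ℤ) := by
    have hcast : 2 * (ℓ : ℝ) - 1 = ((2 * ℓ - 1 : ℕ) : ℝ) := by
      rw [Nat.cast_sub (by omega)]; push_cast; ring
    rw [hcast, ceil_logb_natCast (Nat.cast_nonneg _), Int.clog_natCast]
  have hexp : (m : ℝ) * ((⌈logb q (2 * (ℓ : ℝ) - 1)⌉ : ℝ) + 1) = ((m * k : ℕ) : ℝ) := by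
    rw [hceil]; push_cast [k]; ring
  have hN : (n : ℝ) + 3 - 3 * ℓ = ((n + 3 - 3 * ℓ : ℕ) : ℝ) := by
    rw [Nat.cast_sub (by omega)]; push_cast; ring
  rw [hexp, rpow_natCast, hN, gt_iff_lt, lt_div_iff₀ (by positivity), mul_comm]
  exact_mod_cast hmain

/-- Let `q ≥ 2`, `m ≥ 4` and `ℓ ≥ 12`, set `n = (q^m − 1)/(q − 1)`, and assume `n ≥ 324`
and `ℓ ≤ 0.7·log₂ n + 1.4`.  Put `k = ⌈log_q(2ℓ − 1)⌉ + 1`.  Then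
`(n + 3 − 3ℓ)^ℓ / ℓ! > q^{mk}`. -/
theorem stmt_13 (q m ℓ n : ℕ) (hq : 2 ≤ q) (hm : 4 ≤ m) (hl : 12 ≤ ℓ)
    (hn : n = (q ^ m - 1) / (q - 1)) (hn2 : 324 ≤ n)
    (hln : (ℓ : ℝ) ≤ 0.7 * Real.logb 2 n + 1.4) :
    ((n : ℝ) + 3 - 3 * ℓ) ^ ℓ / (Nat.factorial ℓ : ℝ) >
      (q : ℝ) ^ ((m : ℝ) * ((⌈Real.logb q (2 * (ℓ : ℝ) - 1)⌉ : ℝ) + 1)) :=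
  stmt_13_general q m ℓ n hq hm hl hn hln
end

section
/- Let m and ℓ be integers and ε ∈ {1, −1}; set n = 2^{m−1}(2^m + ε) and assume n ≥ 8128, ℓ ≥ 14 and ℓ < √n/16. Put k = ⌈log₂ ℓ⌉ + 1. Then (2(n+3)/ℓ − 6)^ℓ > 2^{(4m−k)(k+1)/2}. -/
/-!
Since `ℓ < √n / 16`, the base `2(n+3)/ℓ - 6` exceeds `16 √n ≥ 2^(m+3)`, so the left side
is at least `2^((m+3)ℓ)`. On the other side `k = ⌈log₂ ℓ⌉ + 1` is only logarithmic in `ℓ`,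
so `2(k+1) ≤ ℓ` once `ℓ ≥ 14`, and then `(4m - k)(k+1)/2 ≤ 2(m+3)(k+1) ≤ (m+3)ℓ`.
-/

open Real

theorem Nat.two_mul_clog_two_add_two_le {ℓ : ℕ} (hℓ : 14 ≤ ℓ) :
    2 * (Nat.clog 2 ℓ + 2) ≤ ℓ := by
  have hlt : 2 ^ (Nat.clog 2 ℓ - 1) < ℓ := Nat.pow_pred_clog_lt_self one_lt_two (by omega)
  obtain hc | ⟨d, hd⟩ : Nat.clog 2 ℓ ≤ 5 ∨ ∃ d, Nat.clog 2 ℓ = d + 5 :=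
    (le_or_gt _ 5).imp_right fun h ↦ ⟨Nat.clog 2 ℓ - 5, by omega⟩
  · omega
  · rw [hd, show d + 5 - 1 = d + 4 by rfl, pow_add] at hlt
    have : d < 2 ^ d := Nat.lt_two_pow_self
    omega

theorem Real.ceil_logb_two_natCast (ℓ : ℕ) : ⌈logb 2 (ℓ : ℝ)⌉ = Nat.clog 2 ℓ := by
  have := ceil_logb_natCast (b := 2) (Nat.cast_nonneg' ℓ)
  rwa [Nat.cast_ofNat, Int.clog_natCast] at this

theorem two_pow_pred_le_sqrt {m n : ℕ} {ε : ℤ} (hm : 1 ≤ m) (hε : -1 ≤ ε)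
    (hn : (n : ℤ) = 2 ^ (m - 1) * (2 ^ m + ε)) : (2 : ℝ) ^ (m - 1) ≤ √n := by
  obtain ⟨j, rfl⟩ : ∃ j, m = j + 1 := ⟨m - 1, by omega⟩
  rw [add_tsub_cancel_right] at hn ⊢
  rw [Real.le_sqrt (by positivity) (Nat.cast_nonneg _)]
  have hpos : (0 : ℤ) < 2 ^ j := by positivity
  have : ((2 : ℤ) ^ j) ^ 2 ≤ n := by rw [hn, sq, pow_succ (2 : ℤ) j]; nlinarith
  exact_mod_cast this

theorem sixteen_mul_sqrt_lt {x ℓ : ℝ} (hx : 1 ≤ x) (hℓ : 0 < ℓ) (h : ℓ < √x / 16) :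
    16 * √x < 2 * (x + 3) / ℓ - 6 := by
  have hs : 1 ≤ √x := Real.one_le_sqrt.mpr hx
  have hsq : √x * √x = x := Real.mul_self_sqrt (by linarith)
  have : 32 * √x * ℓ < 2 * x := by nlinarith
  rw [lt_sub_iff_add_lt, lt_div_iff₀ hℓ]
  nlinarith

theorem exponent_le_of_two_mul_le {m k ℓ : ℝ} (hm : 0 ≤ m) (hk : -1 ≤ k)
    (hℓ : 2 * (k + 1) ≤ ℓ) : (4 * m - k) * (k + 1) / 2 ≤ (m + 3) * ℓ := by
  nlinarith

/-- Let `m`, `ℓ` be integers and `ε ∈ {1, −1}`; set `n = 2^{m−1}(2^m + ε)` and assume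
`n ≥ 8128`, `ℓ ≥ 14` and `ℓ < √n/16`.  Put `k = ⌈log₂ ℓ⌉ + 1`.  Then
`(2(n+3)/ℓ − 6)^ℓ > 2^{(4m−k)(k+1)/2}`. -/
theorem stmt_14 (m ℓ : ℕ) (ε : ℤ) (hε : ε = 1 ∨ ε = -1) (n : ℕ)
    (hn : (n : ℤ) = 2 ^ (m - 1) * (2 ^ m + ε))
    (hn2 : 8128 ≤ n) (hl : 14 ≤ ℓ) (hl2 : (ℓ : ℝ) < Real.sqrt n / 16) :
    (2 * ((n : ℝ) + 3) / ℓ - 6) ^ ℓ >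
      (2 : ℝ) ^ ((4 * (m : ℝ) - ((⌈Real.logb 2 (ℓ : ℝ)⌉ : ℝ) + 1)) *
        (((⌈Real.logb 2 (ℓ : ℝ)⌉ : ℝ) + 1) + 1) / 2) := by
  have hε' : -1 ≤ ε := by rcases hε with rfl | rfl <;> norm_num
  have hm : 1 ≤ m := by
    rcases Nat.eq_zero_or_pos m with rfl | hm
    · simp only [zero_tsub, pow_zero, one_mul] at hn
      omega
    · exact hm
  have hbase : (2 : ℝ) ^ (m + 3) < 2 * ((n : ℝ) + 3) / ℓ - 6 := calc
    (2 : ℝ) ^ (m + 3) = 16 * 2 ^ (m - 1) := by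
      rw [show m + 3 = m - 1 + 4 by omega, pow_add]; ring
    _ ≤ 16 * √n := by gcongr; exact two_pow_pred_le_sqrt hm hε' hn
    _ < _ := sixteen_mul_sqrt_lt (by exact_mod_cast (by omega : 1 ≤ n)) (by positivity) hl2
  have hclog : 2 * ((Nat.clog 2 ℓ + 1 : ℝ) + 1) ≤ ℓ := by
    exact_mod_cast Nat.two_mul_clog_two_add_two_le hl
  rw [ceil_logb_two_natCast, Int.cast_natCast]
  calc (2 : ℝ) ^ ((4 * (m : ℝ) - (Nat.clog 2 ℓ + 1)) * ((Nat.clog 2 ℓ + 1) + 1) / 2)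
      ≤ 2 ^ (((m + 3) * ℓ : ℕ) : ℝ) := by
        gcongr
        · norm_num
        · push_cast
          have hk : (0 : ℝ) ≤ Nat.clog 2 ℓ := Nat.cast_nonneg _
          exact exponent_le_of_two_mul_le (by positivity) (by linarith) hclog
    _ = ((2 : ℝ) ^ (m + 3)) ^ ℓ := by rw [rpow_natCast, pow_mul]
    _ < _ := pow_lt_pow_left₀ hbase (by positivity) (by omega)
end
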